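/- arXiv:2405.17367 — 4 statements merged into one kernel-verified Lean document; each statement's English description precedes it below -/
import Mathlib

section
/- Let X, Y be Banach spaces with Y compactly embedded in X, and let {U_σ(t,s)}_{σ∈Σ} be a system of evolution processes on X. Let 𝓑 ⊆ X be a closed bounded set with 𝓑 ⊆ B_X(x₀, R) for some x₀ ∈ 𝓑 and R > 0, and let τ > 0 satisfy U_σ(t,0)𝓑 ⊆ 𝓑 for all t ≥ τ and σ ∈ Σ. Assume uniform smoothing: there is κ = κ(τ) > 0 with sup_{σ∈Σ} ‖U_σ(τ,0)x − U_σ(τ,0)y‖_Y ≤ κ‖x−y‖_X for all x,y ∈ 𝓑. Fix ν ∈ (0,1) and let N be the minimal number of open balls of radius ν/(2κ) in X needed to cover the closed unit ball of Y. Then for every σ ∈ Σ and every n ∈ ℕ, the set U_σ(nτ,0)𝓑 can be covered by at most N^n open balls of X of radius Rν^n, i.e. N_X(U_σ(nτ,0)𝓑, Rν^n) ≤ N^n. -/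
open Filter Set Metric Bornology
open scoped ENNReal NNReal Topology

noncomputable def coverN {X : Type*} [MetricSpace X] (K : Set X) (r : ℝ) : ℝ≥0∞ :=
  sInf {n : ℝ≥0∞ | ∃ s : Finset X, (s.card : ℝ≥0∞) = n ∧ K ⊆ ⋃ x ∈ s, Metric.ball x r}

noncomputable def dimBox {X : Type*} [MetricSpace X] (K : Set X) : ℝ≥0∞ :=
  Filter.limsup (fun r : ℝ =>
    if coverN K r = ⊤ then (⊤ : ℝ≥0∞)
    else ENNReal.ofReal (Real.log (coverN K r).toReal / (-Real.log r)))
    (nhdsWithin 0 (Set.Ioi 0))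

structure EvolSystem (X : Type*) (Ξ : Type*) [MetricSpace X] [MetricSpace Ξ] where
  th : ℝ → Ξ → Ξ
  th_cont : ∀ t, Continuous (th t)
  th_zero : th 0 = id
  th_add : ∀ t s, th t ∘ th s = th (t + s)
  Sg : Set Ξ
  Sg_compact : IsCompact Sg
  Sg_inv : ∀ t, th t '' Sg = Sg
  U : Ξ → ℝ → ℝ → X → X
  U_cont : ∀ σ ∈ Sg, ∀ t s : ℝ, s ≤ t → Continuous (U σ t s)
  U_id : ∀ σ ∈ Sg, ∀ s : ℝ, U σ s s = id
  U_comp : ∀ σ ∈ Sg, ∀ t s r : ℝ, r ≤ s → s ≤ t → U σ t s ∘ U σ s r = U σ t r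
  U_jointCont : ∀ σ ∈ Sg, ∀ x : X,
    ContinuousOn (fun p : ℝ × ℝ => U σ p.1 p.2 x) {p : ℝ × ℝ | p.2 ≤ p.1}
  translation : ∀ σ ∈ Sg, ∀ h t s : ℝ, s ≤ t → U (th h σ) t s = U σ (t + h) (s + h)

def IsPullbackAttractor {X : Type*} [MetricSpace X] (U : ℝ → ℝ → X → X) (A : ℝ → Set X) : Prop :=
  (∀ t, IsCompact (A t)) ∧ Bornology.IsBounded (⋃ t : ℝ, A t) ∧
  (∀ t s : ℝ, s ≤ t → U t s '' A s = A t) ∧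
  (∀ B : Set X, Bornology.IsBounded B → ∀ t : ℝ, ∀ ε > 0, ∃ s₀ ≤ t, ∀ s ≤ s₀,
     ∀ x ∈ B, Metric.infDist (U t s x) (A t) ≤ ε)

lemma coverN_le_card {X : Type*} [MetricSpace X] {K : Set X} {r : ℝ} {s : Finset X}
    (h : K ⊆ ⋃ x ∈ s, Metric.ball x r) : coverN K r ≤ s.card :=
  sInf_le ⟨s, rfl, h⟩

lemma coverN_witness {X : Type*} [MetricSpace X] {K : Set X} {r : ℝ}
    (h : ∃ s : Finset X, K ⊆ ⋃ x ∈ s, Metric.ball x r) :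
    ∃ s : Finset X, (s.card : ℝ≥0∞) = coverN K r ∧ K ⊆ ⋃ x ∈ s, Metric.ball x r := by
  classical
  set T : Set ℕ := {k | ∃ s : Finset X, s.card = k ∧ K ⊆ ⋃ x ∈ s, Metric.ball x r} with hT
  have hTne : T.Nonempty := by
    obtain ⟨s, hs⟩ := h
    exact ⟨s.card, s, rfl, hs⟩
  obtain ⟨s, hscard, hscov⟩ := Nat.sInf_mem hTne
  refine ⟨s, le_antisymm ?_ (coverN_le_card hscov), hscov⟩
  refine le_sInf ?_
  rintro m ⟨s', rfl, hs'⟩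
  have h1 : sInf T ≤ s'.card := Nat.sInf_le ⟨s', rfl, hs'⟩
  exact_mod_cast hscard ▸ Nat.cast_le.mpr h1

lemma coverN_witness' {X : Type*} [MetricSpace X] {K : Set X} {r : ℝ}
    (h : coverN K r ≠ ⊤) :
    ∃ s : Finset X, (s.card : ℝ≥0∞) = coverN K r ∧ K ⊆ ⋃ x ∈ s, Metric.ball x r := by
  apply coverN_witness
  by_contra hc
  push_neg at hc
  have : {n : ℝ≥0∞ | ∃ s : Finset X, (s.card : ℝ≥0∞) = n ∧ K ⊆ ⋃ x ∈ s, Metric.ball x r} = ∅ := by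
    ext n
    simp only [Set.mem_setOf_eq, Set.mem_empty_iff_false, iff_false]
    rintro ⟨s, -, hs⟩
    exact hc s hs
  exact h (by simp [coverN, this])

/-- iterated covering estimate: under uniform smoothing, for every symbol `σ` and
`n ∈ ℕ`, the set `U_σ(nτ,0)𝓑` is covered by at most `N^n` balls of radius `R ν^n`, where `N`
is the number of balls of radius `ν/(2κ)` in `X` needed to cover the unit ball of `Y`. -/
theorem statement8
    {X Y Ξ : Type*} [NormedAddCommGroup X] [NormedSpace ℝ X] [CompleteSpace X]
    [NormedAddCommGroup Y] [NormedSpace ℝ Y] [CompleteSpace Y] [MetricSpace Ξ]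
    (e : Y →L[ℝ] X) (he_inj : Function.Injective e)
    (he_cpt : IsCompact (closure (⇑e '' Metric.closedBall 0 1)))
    (sys : EvolSystem X Ξ)
    (𝓑 : Set X) (h𝓑closed : IsClosed 𝓑) (h𝓑bdd : Bornology.IsBounded 𝓑)
    (x₀ : X) (hx₀ : x₀ ∈ 𝓑) (R : ℝ) (hR : 0 < R) (h𝓑ball : 𝓑 ⊆ Metric.ball x₀ R)
    (τ : ℝ) (hτ : 0 < τ)
    (hSelfAbs : ∀ t ≥ τ, ∀ σ ∈ sys.Sg, sys.U σ t 0 '' 𝓑 ⊆ 𝓑)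
    -- uniform smoothing at time `τ` with constant `κ`
    (κ : ℝ) (hκ : 0 < κ)
    (hH2 : ∀ σ ∈ sys.Sg, ∀ x ∈ 𝓑, ∀ y ∈ 𝓑,
      ∃ w : Y, e w = sys.U σ τ 0 x - sys.U σ τ 0 y ∧ ‖w‖ ≤ κ * ‖x - y‖)
    (ν : ℝ) (hν : ν ∈ Set.Ioo (0:ℝ) 1) :
    ∀ σ ∈ sys.Sg, ∀ n : ℕ,
      coverN (sys.U σ (n * τ) 0 '' 𝓑) (R * ν ^ n) ≤
        (coverN (⇑e '' Metric.closedBall 0 1) (ν / (2 * κ))) ^ n := by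
  classical
  intro σ hσ n
  obtain ⟨hν0, hν1⟩ := hν
  set N : ℝ≥0∞ := coverN (⇑e '' Metric.closedBall 0 1) (ν / (2 * κ)) with hNdef
  have hrpos : 0 < ν / (2 * κ) := div_pos hν0 (by positivity)
  have htb : TotallyBounded (⇑e '' Metric.closedBall 0 1) :=
    he_cpt.totallyBounded.subset subset_closure
  obtain ⟨t0, ht0fin, ht0cov⟩ := (Metric.totallyBounded_iff).mp htb _ hrpos
  have hex : ∃ s : Finset X,
      (⇑e '' Metric.closedBall 0 1) ⊆ ⋃ x ∈ s, Metric.ball x (ν / (2 * κ)) := by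
    refine ⟨ht0fin.toFinset, ?_⟩
    simpa [Set.Finite.mem_toFinset] using ht0cov
  obtain ⟨t, htcard, htcov⟩ := coverN_witness hex
  have hNfin : N ≠ ⊤ := by rw [hNdef, ← htcard]; exact ENNReal.natCast_ne_top _
  induction n with
  | zero =>
    have hid : sys.U σ ((0 : ℕ) * τ) 0 = id := by
      have h := sys.U_id σ hσ 0
      simpa using h
    have hcov : sys.U σ ((0 : ℕ) * τ) 0 '' 𝓑 ⊆
        ⋃ x ∈ ({x₀} : Finset X), Metric.ball x (R * ν ^ 0) := by
      rw [hid]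
      intro x hx
      simp only [Finset.mem_singleton, Set.iUnion_iUnion_eq_left]
      simpa using h𝓑ball (by simpa using hx)
    calc coverN (sys.U σ ((0 : ℕ) * τ) 0 '' 𝓑) (R * ν ^ 0)
        ≤ (({x₀} : Finset X).card : ℝ≥0∞) := coverN_le_card hcov
      _ ≤ N ^ 0 := by simp
  | succ n ih =>
    set ρ : ℝ := R * ν ^ n with hρdef
    have hρpos : 0 < ρ := by positivity
    have hlt : coverN (sys.U σ ((n : ℕ) * τ) 0 '' 𝓑) ρ ≠ ⊤ :=
      ne_top_of_le_ne_top (ENNReal.pow_ne_top hNfin) ih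
    obtain ⟨s, hscard, hscov⟩ := coverN_witness' hlt
    -- the translated symbol
    set σ' : Ξ := sys.th ((n : ℕ) * τ) σ with hσ'def
    have hσ' : σ' ∈ sys.Sg := by
      rw [← sys.Sg_inv ((n : ℕ) * τ)]
      exact ⟨σ, hσ, rfl⟩
    set K : Set X := sys.U σ ((n : ℕ) * τ) 0 '' 𝓑 with hKdef
    have hK𝓑 : K ⊆ 𝓑 := by
      rcases Nat.eq_zero_or_pos n with hn | hn
      · subst hn
        have hid : sys.U σ ((0 : ℕ) * τ) 0 = id := by
          have h := sys.U_id σ hσ 0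
          simpa using h
        rw [hKdef, hid]
        simp
      · refine hSelfAbs _ ?_ σ hσ
        calc τ = 1 * τ := (one_mul τ).symm
          _ ≤ (n : ℝ) * τ := by
            apply mul_le_mul_of_nonneg_right _ hτ.le
            exact_mod_cast hn
    have hτn : (0:ℝ) ≤ (n : ℕ) * τ := by positivity
    have hτn' : ((n : ℕ) : ℝ) * τ ≤ ((n + 1 : ℕ) : ℝ) * τ := by
      push_cast
      nlinarith
    have hcomp : sys.U σ (((n + 1 : ℕ) : ℝ) * τ) (((n : ℕ) : ℝ) * τ) ∘
        sys.U σ (((n : ℕ) : ℝ) * τ) 0 = sys.U σ (((n + 1 : ℕ) : ℝ) * τ) 0 :=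
      sys.U_comp σ hσ _ _ _ hτn hτn'
    have htrans : sys.U σ' τ 0 = sys.U σ (((n + 1 : ℕ) : ℝ) * τ) (((n : ℕ) : ℝ) * τ) := by
      have h := sys.translation σ hσ (((n : ℕ) : ℝ) * τ) τ 0 hτ.le
      have e1 : τ + ((n : ℕ) : ℝ) * τ = ((n + 1 : ℕ) : ℝ) * τ := by push_cast; ring
      have e2 : (0 : ℝ) + ((n : ℕ) : ℝ) * τ = ((n : ℕ) : ℝ) * τ := by ring
      rw [hσ'def, h, e1, e2]
    have himg : sys.U σ ((n + 1 : ℕ) * τ) 0 '' 𝓑 = sys.U σ' τ 0 '' K := by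
      rw [hKdef, ← Set.image_comp, htrans, hcomp]
    -- picking centers within K
    set pick : X → X := fun c =>
      if h : (K ∩ Metric.ball c ρ).Nonempty then h.choose else x₀ with hpickdef
    set a : ℝ := 2 * κ * ρ with hadef
    have ha : 0 < a := by positivity
    set F : X × X → X := fun p => sys.U σ' τ 0 (pick p.1) + a • p.2 with hFdef
    set new : Finset X := (s ×ˢ t).image F with hnewdef
    have hcov : sys.U σ' τ 0 '' K ⊆ ⋃ p ∈ new, Metric.ball p (R * ν ^ (n + 1)) := by
      rintro _ ⟨x, hxK, rfl⟩
      have hx' := hscov hxK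
      simp only [Set.mem_iUnion, exists_prop] at hx'
      obtain ⟨c, hcs, hxc⟩ := hx'
      have hne : (K ∩ Metric.ball c ρ).Nonempty := ⟨x, hxK, hxc⟩
      have hy : pick c ∈ K ∩ Metric.ball c ρ := by
        rw [hpickdef]
        simp only [dif_pos hne]
        exact hne.choose_spec
      set y : X := pick c
      have hdxy : dist x y < 2 * ρ := by
        have h1 := mem_ball.mp hxc
        have h2 := mem_ball.mp hy.2
        calc dist x y ≤ dist x c + dist c y := dist_triangle x c y
          _ < ρ + ρ := by rw [dist_comm c y] at *; linarith
          _ = 2 * ρ := by ring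
      obtain ⟨w, hw1, hw2⟩ := hH2 σ' hσ' x (hK𝓑 hxK) y (hK𝓑 hy.1)
      have hwa : ‖w‖ ≤ a := by
        have : κ * ‖x - y‖ ≤ κ * (2 * ρ) := by
          apply mul_le_mul_of_nonneg_left _ hκ.le
          rw [← dist_eq_norm]
          exact hdxy.le
        rw [hadef]
        nlinarith
      set w' : Y := a⁻¹ • w with hw'def
      have hw'mem : w' ∈ Metric.closedBall (0 : Y) 1 := by
        rw [mem_closedBall_zero_iff, hw'def, norm_smul, norm_inv, Real.norm_eq_abs,
          abs_of_pos ha]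
        rw [inv_mul_le_iff₀ ha, mul_one]
        exact hwa
      have hew' : e w' ∈ ⇑e '' Metric.closedBall 0 1 := ⟨w', hw'mem, rfl⟩
      have := htcov hew'
      simp only [Set.mem_iUnion, exists_prop] at this
      obtain ⟨z, hzt, hez⟩ := this
      refine Set.mem_iUnion₂.mpr ⟨F (c, z), ?_, ?_⟩
      · exact Finset.mem_image_of_mem F (Finset.mem_product.mpr ⟨hcs, hzt⟩)
      · have heq : sys.U σ' τ 0 x = sys.U σ' τ 0 y + a • e w' := by
          have : a • e w' = e w := by
            rw [hw'def, map_smul, smul_smul, mul_inv_cancel₀ ha.ne', one_smul]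
          rw [this, hw1]
          abel
        have hdist : dist (sys.U σ' τ 0 x) (F (c, z)) < R * ν ^ (n + 1) := by
          rw [heq, hFdef]
          simp only
          rw [dist_eq_norm]
          have hsimp : sys.U σ' τ 0 y + a • e w' - (sys.U σ' τ 0 (pick c) + a • z)
              = a • (e w' - z) := by
            show sys.U σ' τ 0 y + a • e w' - (sys.U σ' τ 0 y + a • z) = a • (e w' - z)
            rw [smul_sub]
            abel
          rw [hsimp, norm_smul, Real.norm_eq_abs, abs_of_pos ha]
          have : ‖e w' - z‖ < ν / (2 * κ) := by
            rw [← dist_eq_norm]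
            exact mem_ball.mp hez
          calc a * ‖e w' - z‖ < a * (ν / (2 * κ)) := by
                exact mul_lt_mul_of_pos_left this ha
            _ = ρ * ν := by
                rw [hadef]; field_simp
            _ = R * ν ^ (n + 1) := by rw [hρdef]; ring
        exact mem_ball.mpr hdist
    have hcard : (new.card : ℝ≥0∞) ≤ N ^ n * N := by
      have h1 : new.card ≤ s.card * t.card := by
        rw [hnewdef]
        calc ((s ×ˢ t).image F).card ≤ (s ×ˢ t).card := Finset.card_image_le
          _ = s.card * t.card := Finset.card_product s t
      calc (new.card : ℝ≥0∞) ≤ ((s.card * t.card : ℕ) : ℝ≥0∞) := by exact_mod_cast h1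
        _ = (s.card : ℝ≥0∞) * (t.card : ℝ≥0∞) := by push_cast; ring
        _ ≤ N ^ n * N := mul_le_mul' (hscard ▸ ih) (le_of_eq htcard)
    calc coverN (sys.U σ ((n + 1 : ℕ) * τ) 0 '' 𝓑) (R * ν ^ (n + 1))
        ≤ (new.card : ℝ≥0∞) := by
          rw [himg]
          exact coverN_le_card hcov
      _ ≤ N ^ n * N := hcard
      _ = N ^ (n + 1) := (pow_succ N n).symm
end

section
/- Let X be a Banach space, Ξ = C(ℝ,X) with the Fréchet metric d_Ξ, and θ_t the translation (θ_tξ)(s) = ξ(t+s). Let g, h ∈ Ξ, Q ≥ 0 and 0 < η < log 2 be such that ‖g(s) − h(s)‖ ≤ Q e^{−η s} for all s ∈ ℝ. Then for every t ∈ ℝ, d_Ξ(θ_t g, θ_t h) ≤ (Q/(1 − e^{η}/2)) e^{−η t}. -/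
open Filter Set Metric
open scoped ENNReal NNReal Topology

/-- `d^{(n)}(ξ₁,ξ₂) = max_{s ∈ [-n,n]} ‖ξ₁(s) - ξ₂(s)‖`. -/
noncomputable def dseg {X : Type*} [NormedAddCommGroup X] (n : ℕ) (ξ₁ ξ₂ : C(ℝ, X)) : ℝ :=
  sSup ((fun s => ‖ξ₁ s - ξ₂ s‖) '' Set.Icc (-(n:ℝ)) (n:ℝ))

/-- The Fréchet metric on `Ξ = C(ℝ,X)`:
`d_Ξ(ξ₁,ξ₂) = Σₙ 2⁻ⁿ d⁽ⁿ⁾(ξ₁,ξ₂)/(1 + d⁽ⁿ⁾(ξ₁,ξ₂))`. -/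
noncomputable def dXi {X : Type*} [NormedAddCommGroup X] (ξ₁ ξ₂ : C(ℝ, X)) : ℝ :=
  ∑' n : ℕ, (1 / 2 ^ n : ℝ) * (dseg n ξ₁ ξ₂ / (1 + dseg n ξ₁ ξ₂))

/-- The translation group `(θ_t ξ)(s) = ξ(t+s)` on `C(ℝ,X)`. -/
noncomputable def shift {X : Type*} [NormedAddCommGroup X] (t : ℝ) (ξ : C(ℝ, X)) : C(ℝ, X) :=
  ξ.comp ⟨fun s => t + s, by continuity⟩

/-- if `‖g(s) - h(s)‖ ≤ Q e^{-η s}` for all `s ∈ ℝ` with `0 < η < log 2`, then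
`d_Ξ(θ_t g, θ_t h) ≤ (Q/(1 - e^η/2)) e^{-η t}` for every `t ∈ ℝ`. -/
theorem statement12 {X : Type*} [NormedAddCommGroup X] (g h : C(ℝ, X)) (Q η : ℝ)
    (hQ : 0 ≤ Q) (hη₀ : 0 < η) (hη₁ : η < Real.log 2)
    (hgh : ∀ s : ℝ, ‖g s - h s‖ ≤ Q * Real.exp (-η * s)) :
    ∀ t : ℝ, dXi (shift t g) (shift t h) ≤ (Q / (1 - Real.exp η / 2)) * Real.exp (-η * t) := by
  intro t
  set r : ℝ := Real.exp η / 2 with hr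
  have hr0 : 0 < r := by positivity
  have hr1 : r < 1 := by
    have : Real.exp η < 2 := by
      calc Real.exp η < Real.exp (Real.log 2) := Real.exp_lt_exp.mpr hη₁
        _ = 2 := Real.exp_log (by norm_num)
    simpa [hr] using (div_lt_one (by norm_num : (0:ℝ) < 2)).mpr this
  -- bound on each dseg
  have hbound : ∀ n : ℕ, ∀ x ∈ ((fun s => ‖shift t g s - shift t h s‖) '' Set.Icc (-(n:ℝ)) (n:ℝ)),
      x ≤ Q * Real.exp (-η * t) * Real.exp (η * n) := by
    intro n x hx
    obtain ⟨s, hs, rfl⟩ := hx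
    have : ‖g (t + s) - h (t + s)‖ ≤ Q * Real.exp (-η * (t + s)) := hgh (t + s)
    calc ‖shift t g s - shift t h s‖ = ‖g (t + s) - h (t + s)‖ := rfl
      _ ≤ Q * Real.exp (-η * (t + s)) := this
      _ ≤ Q * Real.exp (-η * t) * Real.exp (η * n) := by
          rw [mul_assoc, ← Real.exp_add]
          apply mul_le_mul_of_nonneg_left _ hQ
          apply Real.exp_le_exp.mpr
          have : -s ≤ (n : ℝ) := by linarith [hs.1]
          nlinarith [hη₀.le]
  have hne : ∀ n : ℕ, ((fun s => ‖shift t g s - shift t h s‖) '' Set.Icc (-(n:ℝ)) (n:ℝ)).Nonempty := by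
    intro n
    exact ⟨_, ⟨0, by constructor <;> simp [Nat.cast_nonneg], rfl⟩⟩
  have hdle : ∀ n : ℕ, dseg n (shift t g) (shift t h) ≤ Q * Real.exp (-η * t) * Real.exp (η * n) :=
    fun n => Real.sSup_le (hbound n) (by positivity)
  have hd0 : ∀ n : ℕ, 0 ≤ dseg n (shift t g) (shift t h) := by
    intro n
    obtain ⟨x, hx⟩ := hne n
    have hxle := hbound n x hx
    have hbdd : BddAbove ((fun s => ‖shift t g s - shift t h s‖) '' Set.Icc (-(n:ℝ)) (n:ℝ)) :=
      ⟨_, fun y hy => hbound n y hy⟩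
    have := le_csSup hbdd hx
    obtain ⟨s, _, rfl⟩ := hx
    exact le_trans (norm_nonneg _) this
  -- termwise bound
  have hterm : ∀ n : ℕ, (1 / 2 ^ n : ℝ) * (dseg n (shift t g) (shift t h) /
      (1 + dseg n (shift t g) (shift t h))) ≤ Q * Real.exp (-η * t) * r ^ n := by
    intro n
    set d := dseg n (shift t g) (shift t h) with hd
    have h1 : d / (1 + d) ≤ d := by
      rw [div_le_iff₀ (by linarith [hd0 n])]
      nlinarith [hd0 n]
    have h2 : (1 / 2 ^ n : ℝ) * (d / (1 + d)) ≤ (1 / 2 ^ n : ℝ) * d :=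
      mul_le_mul_of_nonneg_left h1 (by positivity)
    refine h2.trans ?_
    have : (1 / 2 ^ n : ℝ) * d ≤ (1 / 2 ^ n : ℝ) * (Q * Real.exp (-η * t) * Real.exp (η * n)) :=
      mul_le_mul_of_nonneg_left (hdle n) (by positivity)
    refine this.trans_eq ?_
    rw [hr, div_pow, ← Real.exp_nat_mul]
    ring_nf
  have hterm0 : ∀ n : ℕ, 0 ≤ (1 / 2 ^ n : ℝ) * (dseg n (shift t g) (shift t h) /
      (1 + dseg n (shift t g) (shift t h))) := by
    intro n
    have := hd0 n
    positivity
  have hsumR : Summable (fun n : ℕ => Q * Real.exp (-η * t) * r ^ n) :=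
    (summable_geometric_of_lt_one hr0.le hr1).mul_left _
  have hsumL : Summable (fun n : ℕ => (1 / 2 ^ n : ℝ) * (dseg n (shift t g) (shift t h) /
      (1 + dseg n (shift t g) (shift t h)))) :=
    Summable.of_nonneg_of_le hterm0 hterm hsumR
  calc dXi (shift t g) (shift t h) ≤ ∑' n : ℕ, Q * Real.exp (-η * t) * r ^ n :=
        Summable.tsum_le_tsum hterm hsumL hsumR
    _ = Q * Real.exp (-η * t) * (1 - r)⁻¹ := by
        rw [tsum_mul_left, tsum_geometric_of_lt_one hr0.le hr1]
    _ = (Q / (1 - Real.exp η / 2)) * Real.exp (-η * t) := by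
        rw [hr]; ring
end

section
/- Let X be a Banach space, M > 0, and Ξ = C(ℝ,X) with the Fréchet metric d_Ξ. (i) For all ξ₁, ξ₂ ∈ Ξ with sup_{s∈ℝ}‖ξ₁(s)‖ ≤ M and sup_{s∈ℝ}‖ξ₂(s)‖ ≤ M, the evaluation at 0 satisfies ‖ξ₁(0) − ξ₂(0)‖ ≤ (1 + 2M) d_Ξ(ξ₁, ξ₂). (ii) Consequently, for every continuous g : ℝ → X with sup_{t∈ℝ}‖g(t)‖ ≤ M, the box-counting dimension of the range g(ℝ) in X is at most the box-counting dimension of the orbit {θ_t g : t ∈ ℝ} in (Ξ, d_Ξ); in particular, if g(ℝ) has infinite box-counting dimension in X, then the hull H_Ξ(g) has infinite box-counting dimension in Ξ. -/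
open Filter Set Metric
open scoped ENNReal NNReal Topology

/-- Covering number of a subset of `Ξ = C(ℝ,X)` by `dXi`-balls of radius `r`. -/
noncomputable def coverNXi {X : Type*} [NormedAddCommGroup X] (K : Set C(ℝ, X)) (r : ℝ) :
    ℝ≥0∞ :=
  sInf {n : ℝ≥0∞ | ∃ s : Finset C(ℝ, X), (s.card : ℝ≥0∞) = n ∧
    ∀ ξ ∈ K, ∃ c ∈ s, dXi c ξ < r}

/-- Box-counting dimension in `(Ξ, d_Ξ)`. -/
noncomputable def dimBoxXi {X : Type*} [NormedAddCommGroup X] (K : Set C(ℝ, X)) : ℝ≥0∞ :=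
  Filter.limsup (fun r : ℝ =>
    if coverNXi K r = ⊤ then (⊤ : ℝ≥0∞)
    else ENNReal.ofReal (Real.log (coverNXi K r).toReal / (-Real.log r)))
    (nhdsWithin 0 (Set.Ioi 0))

/-- The hull of `g` in `(Ξ, d_Ξ)`: the `d_Ξ`-closure of the orbit `{θ_t g : t ∈ ℝ}`. -/
def hullXi {X : Type*} [NormedAddCommGroup X] (g : C(ℝ, X)) : Set C(ℝ, X) :=
  {ξ : C(ℝ, X) | ∀ ε > (0:ℝ), ∃ t : ℝ, dXi (shift t g) ξ < ε}

/-!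
Evaluation at `0` is controlled by the `n = 0` term of `d_Ξ`: if `a = ‖ξ₁(0) - ξ₂(0)‖ ≤ 2M`,
then `a = (1 + a) · a/(1 + a) ≤ (1 + 2M) d_Ξ(ξ₁,ξ₂)`. Since `(θ_t g)(0) = g(t)`, evaluation at `0`
maps the orbit of `g` onto `g(ℝ)` and is `(1 + 2M)`-Lipschitz there, so every `r`-cover of the
orbit yields a `2(1 + 2M)r`-cover of `g(ℝ)`. Rescaling the radius by a constant does not change
the box-counting dimension because `log (c r) / log r → 1` as `r → 0⁺`, and the orbit lies in
the hull.
-/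

lemma div_one_add_le_div_one_add {a b : ℝ} (ha : 0 ≤ a) (hab : a ≤ b) :
    a / (1 + a) ≤ b / (1 + b) := by
  rw [div_le_div_iff₀ (by linarith) (by linarith)]
  linarith

lemma add_div_one_add_le {a b : ℝ} (ha : 0 ≤ a) (hb : 0 ≤ b) :
    (a + b) / (1 + (a + b)) ≤ a / (1 + a) + b / (1 + b) := by
  rw [div_add_div _ _ (by linarith) (by linarith), div_le_div_iff₀ (by linarith) (by positivity)]
  nlinarith [mul_nonneg ha hb, mul_nonneg (mul_nonneg ha hb) (add_nonneg ha hb)]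

section FrechetMetric

variable {X : Type*} [NormedAddCommGroup X] (n : ℕ) (ξ₁ ξ₂ ξ₃ : C(ℝ, X))

lemma zero_mem_Icc_neg_natCast : (0 : ℝ) ∈ Icc (-(n : ℝ)) n :=
  ⟨neg_nonpos.2 n.cast_nonneg, n.cast_nonneg⟩

lemma dseg_bddAbove : BddAbove ((fun s => ‖ξ₁ s - ξ₂ s‖) '' Icc (-(n : ℝ)) n) :=
  isCompact_Icc.bddAbove_image (ξ₁.continuous.sub ξ₂.continuous).norm.continuousOn

lemma norm_sub_le_dseg {s : ℝ} (hs : s ∈ Icc (-(n : ℝ)) n) : ‖ξ₁ s - ξ₂ s‖ ≤ dseg n ξ₁ ξ₂ :=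
  le_csSup (dseg_bddAbove n ξ₁ ξ₂) (mem_image_of_mem _ hs)

lemma dseg_nonneg : 0 ≤ dseg n ξ₁ ξ₂ :=
  (norm_nonneg _).trans (norm_sub_le_dseg n ξ₁ ξ₂ (zero_mem_Icc_neg_natCast n))

lemma dseg_le {C : ℝ} (h : ∀ s ∈ Icc (-(n : ℝ)) n, ‖ξ₁ s - ξ₂ s‖ ≤ C) : dseg n ξ₁ ξ₂ ≤ C :=
  csSup_le ⟨_, mem_image_of_mem _ (zero_mem_Icc_neg_natCast n)⟩ (forall_mem_image.2 h)

lemma dseg_self : dseg n ξ₁ ξ₁ = 0 :=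
  le_antisymm (dseg_le n ξ₁ ξ₁ (by simp)) (dseg_nonneg n ξ₁ ξ₁)

lemma dseg_comm : dseg n ξ₁ ξ₂ = dseg n ξ₂ ξ₁ := by
  simp only [dseg, norm_sub_rev]

lemma dseg_triangle : dseg n ξ₁ ξ₃ ≤ dseg n ξ₁ ξ₂ + dseg n ξ₂ ξ₃ :=
  dseg_le n ξ₁ ξ₃ fun _ hs => (norm_sub_le_norm_sub_add_norm_sub _ _ _).trans
    (add_le_add (norm_sub_le_dseg n ξ₁ ξ₂ hs) (norm_sub_le_dseg n ξ₂ ξ₃ hs))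

lemma dseg_zero : dseg 0 ξ₁ ξ₂ = ‖ξ₁ 0 - ξ₂ 0‖ := by
  simp [dseg]

lemma dXi_term_nonneg : 0 ≤ (1 / 2 ^ n : ℝ) * (dseg n ξ₁ ξ₂ / (1 + dseg n ξ₁ ξ₂)) := by
  have := dseg_nonneg n ξ₁ ξ₂
  positivity

lemma dXi_summable :
    Summable fun n : ℕ => (1 / 2 ^ n : ℝ) * (dseg n ξ₁ ξ₂ / (1 + dseg n ξ₁ ξ₂)) := by
  refine (summable_geometric_two).of_nonneg_of_le (dXi_term_nonneg · ξ₁ ξ₂) fun n => ?_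
  have hd := dseg_nonneg n ξ₁ ξ₂
  have hfrac : dseg n ξ₁ ξ₂ / (1 + dseg n ξ₁ ξ₂) ≤ 1 := by
    rw [div_le_one (by linarith)]
    linarith
  calc (1 / 2 ^ n : ℝ) * (dseg n ξ₁ ξ₂ / (1 + dseg n ξ₁ ξ₂)) ≤ 1 / 2 ^ n * 1 := by gcongr
    _ = (1 / 2) ^ n := by rw [mul_one, one_div_pow]

lemma norm_sub_div_one_add_le_dXi :
    ‖ξ₁ 0 - ξ₂ 0‖ / (1 + ‖ξ₁ 0 - ξ₂ 0‖) ≤ dXi ξ₁ ξ₂ := by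
  rw [← dseg_zero]
  simpa [dXi] using (dXi_summable ξ₁ ξ₂).le_tsum 0 fun j _ => dXi_term_nonneg j ξ₁ ξ₂

lemma dXi_self : dXi ξ₁ ξ₁ = 0 := by
  simp [dXi, dseg_self]

lemma dXi_comm : dXi ξ₁ ξ₂ = dXi ξ₂ ξ₁ := by
  simp only [dXi, dseg_comm _ ξ₁]

lemma dXi_triangle : dXi ξ₁ ξ₃ ≤ dXi ξ₁ ξ₂ + dXi ξ₂ ξ₃ := by
  rw [dXi, dXi, dXi, ← (dXi_summable ξ₁ ξ₂).tsum_add (dXi_summable ξ₂ ξ₃)]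
  refine (dXi_summable ξ₁ ξ₃).tsum_le_tsum (fun n => ?_)
    ((dXi_summable ξ₁ ξ₂).add (dXi_summable ξ₂ ξ₃))
  rw [← mul_add]
  gcongr
  exact (div_one_add_le_div_one_add (dseg_nonneg _ _ _) (dseg_triangle n ξ₁ ξ₂ ξ₃)).trans
    (add_div_one_add_le (dseg_nonneg _ _ _) (dseg_nonneg _ _ _))

lemma norm_sub_eval_zero_le_mul_dXi {B : ℝ} (hB : ‖ξ₁ 0 - ξ₂ 0‖ ≤ B) :
    ‖ξ₁ 0 - ξ₂ 0‖ ≤ (1 + B) * dXi ξ₁ ξ₂ := by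
  set a := ‖ξ₁ 0 - ξ₂ 0‖
  have ha : 0 ≤ a := norm_nonneg _
  calc a = (1 + a) * (a / (1 + a)) := by field_simp
    _ ≤ (1 + B) * dXi ξ₁ ξ₂ :=
      mul_le_mul (by linarith) (norm_sub_div_one_add_le_dXi ξ₁ ξ₂) (by positivity) (by linarith)

end FrechetMetric

section Covering

variable {X : Type*} [NormedAddCommGroup X]

lemma coverNXi_mono {K K' : Set C(ℝ, X)} (h : K ⊆ K') (r : ℝ) :
    coverNXi K r ≤ coverNXi K' r :=
  sInf_le_sInf fun _ ⟨s, hcard, hcov⟩ => ⟨s, hcard, fun ξ hξ => hcov ξ (h hξ)⟩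

lemma coverN_image_eval_zero_le {K : Set C(ℝ, X)} {L : ℝ} (hL : 0 < L)
    (hK : ∀ ξ ∈ K, ∀ η ∈ K, ‖ξ 0 - η 0‖ ≤ L * dXi ξ η) (r : ℝ) :
    coverN ((fun ξ : C(ℝ, X) => ξ 0) '' K) (2 * L * r) ≤ coverNXi K r := by
  classical
  refine le_sInf ?_
  rintro _ ⟨s, rfl, hcov⟩
  -- centers need not lie in `K`: move each one to a point of `K` within `r` of it, if any
  let φ : C(ℝ, X) → C(ℝ, X) := fun c => Classical.epsilon fun η => η ∈ K ∧ dXi c η < r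
  refine le_trans (sInf_le ⟨s.image fun c => φ c 0, rfl, ?_⟩) (Nat.cast_le.2 Finset.card_image_le)
  rintro _ ⟨ξ, hξ, rfl⟩
  obtain ⟨c, hcs, hcξ⟩ := hcov ξ hξ
  obtain ⟨hφK, hφc⟩ : φ c ∈ K ∧ dXi c (φ c) < r :=
    Classical.epsilon_spec (p := fun η => η ∈ K ∧ dXi c η < r) ⟨ξ, hξ, hcξ⟩
  refine mem_iUnion₂.2 ⟨φ c 0, Finset.mem_image_of_mem _ hcs, ?_⟩
  rw [mem_ball, dist_eq_norm]
  calc ‖ξ 0 - φ c 0‖ ≤ L * dXi ξ (φ c) := hK ξ hξ _ hφK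
    _ ≤ L * (dXi ξ c + dXi c (φ c)) := by gcongr; exact dXi_triangle _ _ _
    _ < L * (r + r) := by rw [dXi_comm ξ]; gcongr
    _ = 2 * L * r := by ring

lemma image_eval_zero_range_shift (g : C(ℝ, X)) :
    (fun ξ : C(ℝ, X) => ξ 0) '' range (fun t => shift t g) = range g := by
  rw [← range_comp]
  simp [Function.comp_def, shift]

lemma range_shift_subset_hullXi (g : C(ℝ, X)) : range (fun t => shift t g) ⊆ hullXi g := by
  rintro _ ⟨t, rfl⟩ ε hε
  exact ⟨t, by rwa [dXi_self]⟩

end Covering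

section BoxDimension

noncomputable def logCoverRatio (N : ℝ≥0∞) (r : ℝ) : ℝ≥0∞ :=
  if N = ⊤ then ⊤ else ENNReal.ofReal (Real.log N.toReal / (-Real.log r))

noncomputable def boxDimOf (N : ℝ → ℝ≥0∞) : ℝ≥0∞ :=
  limsup (fun r => logCoverRatio (N r) r) (𝓝[>] 0)

lemma dimBox_eq_boxDimOf {X : Type*} [MetricSpace X] (K : Set X) :
    dimBox K = boxDimOf (coverN K) := rfl

lemma dimBoxXi_eq_boxDimOf {X : Type*} [NormedAddCommGroup X] (K : Set C(ℝ, X)) :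
    dimBoxXi K = boxDimOf (coverNXi K) := rfl

lemma logCoverRatio_mono {N N' : ℝ≥0∞} {r : ℝ} (hN : N ≤ N') (hr₀ : 0 ≤ r) (hr₁ : r ≤ 1) :
    logCoverRatio N r ≤ logCoverRatio N' r := by
  rcases eq_or_ne N' ⊤ with rfl | hN'
  · exact le_top
  simp only [logCoverRatio, if_neg (ne_top_of_le_ne_top hN' hN), if_neg hN']
  rcases (ENNReal.toReal_nonneg (a := N)).eq_or_lt with h0 | hpos
  · simp [← h0]
  · exact ENNReal.ofReal_le_ofReal <| div_le_div_of_nonneg_right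
      (Real.log_le_log hpos (ENNReal.toReal_mono hN' hN)) (neg_nonneg.2 (Real.log_nonpos hr₀ hr₁))

lemma logCoverRatio_mul_left {N : ℝ≥0∞} {c r : ℝ} (h : 0 < Real.log r / Real.log (c * r)) :
    logCoverRatio N (c * r) =
      logCoverRatio N r * ENNReal.ofReal (Real.log r / Real.log (c * r)) := by
  have hr : Real.log r ≠ 0 := by rintro h0; simp [h0] at h
  have hcr : Real.log (c * r) ≠ 0 := by rintro h0; simp [h0] at h
  rcases eq_or_ne N ⊤ with rfl | hN
  · simp [logCoverRatio, ENNReal.top_mul (ENNReal.ofReal_pos.2 h).ne']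
  simp only [logCoverRatio, if_neg hN, ← ENNReal.ofReal_mul' h.le]
  congr 1
  field_simp

lemma tendsto_log_div_log_mul_left {c : ℝ} (hc : 0 < c) :
    Tendsto (fun r => Real.log r / Real.log (c * r)) (𝓝[>] 0) (𝓝 1) := by
  have hlim : Tendsto (fun r => 1 + Real.log c / Real.log r) (𝓝[>] 0) (𝓝 1) := by
    simpa using (tendsto_const_nhds.div_atBot Real.tendsto_log_nhdsGT_zero).const_add 1
  have heq : (fun r => 1 + Real.log c / Real.log r) =ᶠ[𝓝[>] 0]
      fun r => Real.log (c * r) / Real.log r := by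
    filter_upwards [Ioo_mem_nhdsGT one_pos] with r hr
    rw [Real.log_mul hc.ne' hr.1.ne', add_div, div_self (Real.log_neg hr.1 hr.2).ne, add_comm]
  simpa using (hlim.congr' heq).inv₀ one_ne_zero

lemma boxDimOf_le_of_le_comp_mul {NA NB : ℝ → ℝ≥0∞} {c : ℝ} (hc : 0 < c)
    (h : ∀ᶠ r in 𝓝[>] 0, NA (c * r) ≤ NB r) : boxDimOf NA ≤ boxDimOf NB := by
  have hratio := tendsto_log_div_log_mul_left hc
  set ρ : ℝ → ℝ≥0∞ := fun r => ENNReal.ofReal (Real.log r / Real.log (c * r))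
  have hρ : limsup ρ (𝓝[>] 0) = 1 := by
    simpa using (ENNReal.tendsto_ofReal hratio).limsup_eq
  have hmap : map (c * ·) (𝓝[>] (0 : ℝ)) = 𝓝[>] 0 := by
    conv_lhs => rw [← comap_mulLeft_nhdsGT_zero hc]
    exact map_comap_of_surjective (fun y => ⟨y / c, by field_simp⟩) _
  calc boxDimOf NA = limsup (fun r => logCoverRatio (NA (c * r)) (c * r)) (𝓝[>] 0) := by
        conv_lhs => rw [boxDimOf, ← hmap]
        exact (limsup_comp _ (c * ·) _).symm
    _ ≤ limsup (fun r => logCoverRatio (NB r) r * ρ r) (𝓝[>] 0) := by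
        refine limsup_le_limsup ?_
        filter_upwards [h, hratio.eventually (lt_mem_nhds one_pos), Ioo_mem_nhdsGT one_pos]
          with r hNr hρr hr
        rw [logCoverRatio_mul_left hρr]
        exact mul_le_mul_left (logCoverRatio_mono hNr hr.1.le hr.2.le) _
    _ ≤ boxDimOf NB * 1 := by
        rw [← hρ]
        exact ENNReal.limsup_mul_le' (by simp [hρ]) (by simp [hρ])
    _ = boxDimOf NB := mul_one _

end BoxDimension

theorem statement15_general {X : Type*} [NormedAddCommGroup X] (M : ℝ) :
    (∀ ξ₁ ξ₂ : C(ℝ, X), (∀ s : ℝ, ‖ξ₁ s‖ ≤ M) → (∀ s : ℝ, ‖ξ₂ s‖ ≤ M) →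
      ‖ξ₁ 0 - ξ₂ 0‖ ≤ (1 + 2 * M) * dXi ξ₁ ξ₂) ∧
    (∀ g : C(ℝ, X), (∀ t : ℝ, ‖g t‖ ≤ M) →
      dimBox (Set.range ⇑g) ≤ dimBoxXi (Set.range fun t : ℝ => shift t g) ∧
      (dimBox (Set.range ⇑g) = ⊤ → dimBoxXi (hullXi g) = ⊤)) := by
  have hlip : ∀ ξ₁ ξ₂ : C(ℝ, X), (∀ s, ‖ξ₁ s‖ ≤ M) → (∀ s, ‖ξ₂ s‖ ≤ M) →
      ‖ξ₁ 0 - ξ₂ 0‖ ≤ (1 + 2 * M) * dXi ξ₁ ξ₂ := fun ξ₁ ξ₂ h₁ h₂ =>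
    norm_sub_eval_zero_le_mul_dXi ξ₁ ξ₂ ((norm_sub_le _ _).trans (by linarith [h₁ 0, h₂ 0]))
  refine ⟨hlip, fun g hg => ?_⟩
  have hM : 0 ≤ M := (norm_nonneg _).trans (hg 0)
  have hcover (r : ℝ) :
      coverN (range g) (2 * (1 + 2 * M) * r) ≤ coverNXi (range fun t => shift t g) r := by
    rw [← image_eval_zero_range_shift]
    refine coverN_image_eval_zero_le (by linarith) ?_ r
    rintro _ ⟨s, rfl⟩ _ ⟨t, rfl⟩
    exact hlip _ _ (fun _ => hg _) (fun _ => hg _)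
  have horbit : dimBox (range g) ≤ dimBoxXi (range fun t => shift t g) := by
    rw [dimBox_eq_boxDimOf, dimBoxXi_eq_boxDimOf]
    exact boxDimOf_le_of_le_comp_mul (by positivity) (.of_forall hcover)
  refine ⟨horbit, fun htop => top_le_iff.1 (htop ▸ horbit.trans ?_)⟩
  rw [dimBoxXi_eq_boxDimOf, dimBoxXi_eq_boxDimOf]
  refine boxDimOf_le_of_le_comp_mul one_pos (.of_forall fun r => ?_)
  rw [one_mul]
  exact coverNXi_mono (range_shift_subset_hullXi g) r

/-- (i) for uniformly bounded `ξ₁, ξ₂`, evaluation at `0` satisfies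
`‖ξ₁(0) - ξ₂(0)‖ ≤ (1 + 2M) d_Ξ(ξ₁,ξ₂)`; (ii) consequently, for bounded `g` the box-counting
dimension of the range `g(ℝ)` in `X` is at most that of the orbit `{θ_t g}` in `(Ξ,d_Ξ)`; in
particular if `g(ℝ)` has infinite box-counting dimension then so does the hull `H_Ξ(g)`. -/
theorem statement15 {X : Type*} [NormedAddCommGroup X] (M : ℝ) (hM : 0 < M) :
    (∀ ξ₁ ξ₂ : C(ℝ, X), (∀ s : ℝ, ‖ξ₁ s‖ ≤ M) → (∀ s : ℝ, ‖ξ₂ s‖ ≤ M) →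
      ‖ξ₁ 0 - ξ₂ 0‖ ≤ (1 + 2 * M) * dXi ξ₁ ξ₂) ∧
    (∀ g : C(ℝ, X), (∀ t : ℝ, ‖g t‖ ≤ M) →
      dimBox (Set.range ⇑g) ≤ dimBoxXi (Set.range fun t : ℝ => shift t g) ∧
      (dimBox (Set.range ⇑g) = ⊤ → dimBoxXi (hullXi g) = ⊤)) :=
  statement15_general M
end

section
/- Let Y be an infinite-dimensional normed space, X a normed space, and T : Y → X an injective continuous linear map. Then the image T(B̄_Y) of the closed unit ball B̄_Y of Y has infinite box-counting dimension as a subset of X. -/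
open Filter Set Metric
open scoped ENNReal NNReal Topology

open MeasureTheory Module in
lemma aux_card_cover {E : Type*} [NormedAddCommGroup E] [NormedSpace ℝ E]
    [FiniteDimensional ℝ E] {ρ : ℝ} (hρ : 0 < ρ) (t : Finset E)
    (h : closedBall (0 : E) 1 ⊆ ⋃ y ∈ t, ball y ρ) :
    1 / ρ ^ (finrank ℝ E) ≤ (t.card : ℝ) := by
  borelize E
  set μ := (Module.finBasis ℝ E).addHaar with hμ
  have hpos : 0 < μ (ball (0 : E) 1) := measure_ball_pos μ 0 one_pos
  have hfin : μ (ball (0 : E) 1) ≠ ⊤ := by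
    exact ne_of_lt ((measure_mono ball_subset_closedBall).trans_lt
      (isCompact_closedBall 0 1).measure_lt_top)
  have hle : (1 : ℝ≥0∞) * μ (ball (0 : E) 1) ≤
      ((t.card : ℝ≥0∞) * ENNReal.ofReal (ρ ^ finrank ℝ E)) * μ (ball (0 : E) 1) := by
    calc (1 : ℝ≥0∞) * μ (ball (0 : E) 1) = μ (ball (0 : E) 1) := one_mul _
    _ ≤ μ (closedBall (0 : E) 1) := measure_mono ball_subset_closedBall
    _ ≤ μ (⋃ y ∈ t, ball y ρ) := measure_mono h
    _ ≤ ∑ y ∈ t, μ (ball y ρ) := measure_biUnion_finset_le _ _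
    _ = ((t.card : ℝ≥0∞) * ENNReal.ofReal (ρ ^ finrank ℝ E)) * μ (ball (0 : E) 1) := by
        rw [Finset.sum_congr rfl (fun y _ => Measure.addHaar_ball_of_pos μ y hρ),
          Finset.sum_const, nsmul_eq_mul, mul_assoc]
  have h1 : (1 : ℝ≥0∞) ≤ (t.card : ℝ≥0∞) * ENNReal.ofReal (ρ ^ finrank ℝ E) :=
    (ENNReal.mul_le_mul_iff_left hpos.ne' hfin).mp hle
  rw [← ENNReal.ofReal_natCast, ← ENNReal.ofReal_mul (Nat.cast_nonneg _)] at h1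
  have h2 : (1 : ℝ) ≤ (t.card : ℝ) * ρ ^ finrank ℝ E := ENNReal.one_le_ofReal.mp h1
  exact (div_le_iff₀ (pow_pos hρ _)).mpr (by linarith)

/-- the image of the closed unit ball of an infinite dimensional normed space
under an injective continuous linear map has infinite box-counting dimension. -/
theorem statement16 {Y X : Type*} [NormedAddCommGroup Y] [NormedSpace ℝ Y]
    [NormedAddCommGroup X] [NormedSpace ℝ X]
    (hY : ¬ FiniteDimensional ℝ Y) (T : Y →L[ℝ] X) (hT : Function.Injective T) :
    dimBox (⇑T '' Metric.closedBall 0 1) = ⊤ := by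
  set K : Set X := ⇑T '' Metric.closedBall 0 1 with hK
  rw [dimBox, Filter.limsup_eq, sInf_eq_top]
  intro a ha
  by_contra hatop
  -- choose the dimension n
  set n : ℕ := ⌊2 * a.toReal⌋₊ + 1 with hn
  have hn2 : 2 * a.toReal < (n : ℝ) := by
    have := Nat.lt_floor_add_one (2 * a.toReal)
    push_cast [hn]; linarith [this]
  -- find an n-dimensional subspace
  have hrank : (n : Cardinal) ≤ Module.rank ℝ Y := by
    have : ¬ Module.rank ℝ Y < Cardinal.aleph0 := by
      rw [Module.rank_lt_aleph0_iff]
      exact hY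
    exact le_of_lt ((Cardinal.nat_lt_aleph0 n).trans_le (not_lt.mp this))
  obtain ⟨b, hbcard, hbli⟩ := exists_finset_linearIndependent_of_le_rank hrank
  set V : Submodule ℝ Y := Submodule.span ℝ (b : Set Y) with hV
  haveI : FiniteDimensional ℝ V := FiniteDimensional.span_of_finite ℝ b.finite_toSet
  have hdim : Module.finrank ℝ V = n := by
    rw [hV, finrank_span_finset_eq_card hbli, hbcard]
  -- antilipschitz constant
  set S : V →ₗ[ℝ] X := T.toLinearMap.comp V.subtype with hS
  have hSinj : Function.Injective S := by
    intro v w hvw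
    exact Subtype.ext (hT hvw)
  obtain ⟨c, hc, hanti⟩ := S.exists_antilipschitzWith (LinearMap.ker_eq_bot.mpr hSinj)
  set C : ℝ := Real.log (2 * (c : ℝ)) with hC
  -- choose a small radius r in the bad set
  obtain ⟨u, hu, huS⟩ := mem_nhdsGT_iff_exists_Ioo_subset.mp ha
  set r : ℝ := min (u / 2) (min (1 / 2) (Real.exp (-(2 * |C| + 1)))) with hr
  have hrpos : 0 < r := by
    apply lt_min (by simpa using hu)
    exact lt_min (by norm_num) (Real.exp_pos _)
  have hru : r < u := by
    have : r ≤ u / 2 := min_le_left _ _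
    have := hu
    simp only [Set.mem_Ioi] at this
    linarith
  have hrmem : r ∈ {x | (if coverN K x = ⊤ then (⊤ : ℝ≥0∞)
      else ENNReal.ofReal (Real.log (coverN K x).toReal / (-Real.log x))) ≤ a} :=
    huS ⟨hrpos, hru⟩
  simp only [Set.mem_setOf_eq] at hrmem
  have hrlog : -Real.log r ≥ 2 * |C| + 1 := by
    have h1 : r ≤ Real.exp (-(2 * |C| + 1)) := le_trans (min_le_right _ _) (min_le_right _ _)
    have := Real.log_le_log hrpos h1
    rw [Real.log_exp] at this
    linarith
  set L : ℝ := -Real.log r with hL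
  have hLpos : 0 < L := by
    have := abs_nonneg C
    rw [hL]; linarith
  -- the key covering lower bound
  have hcover : ∀ s : Finset X, K ⊆ ⋃ x ∈ s, Metric.ball x r →
      1 / ((c : ℝ) * (2 * r)) ^ n ≤ (s.card : ℝ) := by
    intro s hs
    classical
    set g : X → V := fun x =>
      if h : ∃ w : V, ‖w‖ ≤ 1 ∧ ⇑T ↑w ∈ Metric.ball x r then h.choose else 0 with hg
    have hgspec : ∀ x : X, (∃ w : V, ‖w‖ ≤ 1 ∧ ⇑T ↑w ∈ Metric.ball x r) →
        (‖g x‖ ≤ 1 ∧ ⇑T ↑(g x) ∈ Metric.ball x r) := by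
      intro x hx
      simp only [hg, dif_pos hx]
      exact hx.choose_spec
    have hρ : 0 < (c : ℝ) * (2 * r) := by positivity
    have hsub : closedBall (0 : V) 1 ⊆ ⋃ y ∈ s.image g, ball y ((c : ℝ) * (2 * r)) := by
      intro v hv
      have hv1 : ‖v‖ ≤ 1 := by simpa using hv
      have hvK : ⇑T ↑v ∈ K := ⟨(v : Y), by simpa [mem_closedBall_zero_iff] using hv1, rfl⟩
      obtain ⟨x, hxs, hxball⟩ := Set.mem_iUnion₂.mp (hs hvK)
      have hex : ∃ w : V, ‖w‖ ≤ 1 ∧ ⇑T ↑w ∈ Metric.ball x r := ⟨v, hv1, hxball⟩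
      obtain ⟨hg1, hg2⟩ := hgspec x hex
      refine Set.mem_iUnion₂.mpr ⟨g x, Finset.mem_image_of_mem g hxs, ?_⟩
      have hd : dist (S v) (S (g x)) < 2 * r := by
        have := dist_triangle (⇑T ↑v) x (⇑T ↑(g x))
        have h1 : dist (⇑T ↑v) x < r := hxball
        have h2 : dist x (⇑T ↑(g x)) < r := by rw [dist_comm]; exact hg2
        calc dist (S v) (S (g x)) = dist (⇑T ↑v) (⇑T ↑(g x)) := rfl
        _ < 2 * r := by linarith
      have := hanti.le_mul_dist v (g x)
      calc dist v (g x) ≤ (c : ℝ) * dist (S v) (S (g x)) := this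
      _ < (c : ℝ) * (2 * r) := by
          exact mul_lt_mul_of_pos_left hd (by exact_mod_cast hc)
    have := aux_card_cover hρ (s.image g) hsub
    rw [hdim] at this
    calc 1 / ((c : ℝ) * (2 * r)) ^ n ≤ ((s.image g).card : ℝ) := this
    _ ≤ (s.card : ℝ) := by exact_mod_cast Finset.card_image_le
  -- translate to a lower bound on coverN
  have hcN : ENNReal.ofReal (1 / ((c : ℝ) * (2 * r)) ^ n) ≤ coverN K r := by
    apply le_sInf
    rintro m ⟨s, hsc, hscov⟩
    rw [← hsc, ← ENNReal.ofReal_natCast]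
    exact ENNReal.ofReal_le_ofReal (hcover s hscov)
  -- now derive the contradiction
  by_cases htop : coverN K r = ⊤
  · rw [if_pos htop] at hrmem
    exact hatop (top_le_iff.mp hrmem)
  rw [if_neg htop] at hrmem
  have hNlb : 1 / ((c : ℝ) * (2 * r)) ^ n ≤ (coverN K r).toReal :=
    (ENNReal.ofReal_le_iff_le_toReal htop).mp hcN
  have hρ : 0 < (c : ℝ) * (2 * r) := by
    have : (0:ℝ) < c := by exact_mod_cast hc
    positivity
  have hlogr : Real.log r = -L := by rw [hL]; ring
  have hlogval : Real.log (1 / ((c : ℝ) * (2 * r)) ^ n) = (n : ℝ) * (L - C) := by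
    have hc0 : (0:ℝ) < 2 * (c : ℝ) := by
      have : (0:ℝ) < c := by exact_mod_cast hc
      linarith
    rw [one_div, Real.log_inv, Real.log_pow,
      show (c : ℝ) * (2 * r) = (2 * (c : ℝ)) * r by ring,
      Real.log_mul hc0.ne' hrpos.ne', ← hC, hlogr]
    ring
  have hlogN : (n : ℝ) * (L - C) ≤ Real.log (coverN K r).toReal := by
    rw [← hlogval]
    exact Real.log_le_log (by positivity) hNlb
  have hnn : (0:ℝ) ≤ (n : ℝ) := Nat.cast_nonneg n
  have habs : C ≤ |C| := le_abs_self C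
  have hstep1 : (n : ℝ) / 2 ≤ (n : ℝ) * (L - C) / L := by
    rw [div_le_div_iff₀ (by norm_num) hLpos]
    nlinarith [mul_le_mul_of_nonneg_left habs hnn, abs_nonneg C,
      mul_le_mul_of_nonneg_left hrlog hnn]
  have hstep2 : (n : ℝ) * (L - C) / L ≤ Real.log (coverN K r).toReal / L := by
    gcongr
  have hfinal : a.toReal < Real.log (coverN K r).toReal / (-Real.log r) := by
    rw [← hL]
    linarith
  exact absurd hrmem (not_le.mpr ((ENNReal.lt_ofReal_iff_toReal_lt hatop).mpr hfinal))
end
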